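/- arXiv:2512.10697 — 2 statements merged into one kernel-verified Lean document; each statement's English description precedes it below -/
import Mathlib

section
/- Let Y₁, …, Y_{2n} be i.i.d. N(θ, σ²) with σ > 0 and n ≥ 1. Let S₁ = (1/n)∑_{i=1}^n Y_i, let X = 1 if S₁ ≤ ψ and X = 0 otherwise, and define θ̂ = S₁ if X = 0, and θ̂ = (1/(2n))∑_{i=1}^{2n} Y_i if X = 1. Then E[θ̂] = θ + (σ/(2√n)) φ((√n/σ)(ψ − θ)). -/
open MeasureTheory ProbabilityTheory Real

/-- Standard normal density. -/
noncomputable def stdNormalPDF (z : ℝ) : ℝ := (Real.sqrt (2 * Real.pi))⁻¹ * Real.exp (-z ^ 2 / 2)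

/-- Standard normal cumulative distribution function. -/
noncomputable def stdNormalCDF (z : ℝ) : ℝ := ∫ t in Set.Iic z, stdNormalPDF t

/-
Write `S₂` for the mean of the second block, so that `θhat = S₁ + 1{S₁ ≤ ψ} (S₂ - S₁) / 2`.
Since `S₂` is independent of `S₁` and has mean `θ`, `E θhat = θ + E[θ - S₁; S₁ ≤ ψ] / 2`.
Finally `S₁ ~ N(θ, v)` with `v = σ² / n`, and the truncated mean `E[θ - S₁; S₁ ≤ ψ]` equals
`v φ_v(ψ)`, because `x ↦ v φ_v(x)` is an antiderivative of `(θ - x) φ_v(x)` for the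
`N(θ, v)` density `φ_v`.
-/

open Filter Topology Set
open scoped NNReal

namespace ProbabilityTheory

section GaussianTail

variable {m : ℝ} {v : ℝ≥0}

lemma hasDerivAt_mul_gaussianPDFReal (hv : v ≠ 0) (x : ℝ) :
    HasDerivAt (fun x ↦ v * gaussianPDFReal m v x) (gaussianPDFReal m v x * (m - x)) x := by
  have hexp : HasDerivAt (fun x ↦ rexp (-(x - m) ^ 2 / (2 * v)))
      (rexp (-(x - m) ^ 2 / (2 * v)) * (-(2 * (x - m)) / (2 * v))) x := by
    simpa using (((hasDerivAt_id x).sub_const m).pow 2).neg.div_const (2 * (v : ℝ)) |>.exp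
  have hpdf : (fun x ↦ v * gaussianPDFReal m v x)
      = fun x ↦ v * (√(2 * π * v))⁻¹ * rexp (-(x - m) ^ 2 / (2 * v)) := by
    ext x; rw [gaussianPDFReal]; ring
  rw [hpdf]
  refine (hexp.const_mul _).congr_deriv ?_
  rw [gaussianPDFReal]
  field_simp
  ring

lemma integrable_gaussianPDFReal_mul_sub (m : ℝ) (v : ℝ≥0) :
    Integrable (fun x ↦ gaussianPDFReal m v x * (m - x)) := by
  rcases eq_or_ne v 0 with rfl | hv
  · simp [gaussianPDFReal_zero_var]
  have h : Integrable (fun x ↦ m - x) (gaussianReal m v) :=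
    (integrable_const m).sub ((memLp_id_gaussianReal 1).integrable (by simp))
  rw [gaussianReal_of_var_ne_zero _ hv, integrable_withDensity_iff_integrable_smul'
    (measurable_gaussianPDF m v) (ae_of_all _ fun _ ↦ gaussianPDF_lt_top)] at h
  simpa using h

lemma setIntegral_Iic_sub_gaussianReal (hv : v ≠ 0) (ψ : ℝ) :
    ∫ x in Iic ψ, (m - x) ∂gaussianReal m v = v * gaussianPDFReal m v ψ := by
  have hint := (integrable_gaussianPDFReal_mul_sub m v).integrableOn (s := Iic ψ)
  have hderiv : ∀ x ∈ Iic ψ, HasDerivAt (fun x ↦ v * gaussianPDFReal m v x)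
      (gaussianPDFReal m v x * (m - x)) x := fun x _ ↦ hasDerivAt_mul_gaussianPDFReal hv x
  have hlim : Tendsto (fun x ↦ v * gaussianPDFReal m v x) atBot (𝓝 0) :=
    tendsto_zero_of_hasDerivAt_of_integrableOn_Iic hderiv hint
      ((integrable_gaussianPDFReal m v).const_mul _).integrableOn
  rw [gaussianReal_of_var_ne_zero _ hv, restrict_withDensity measurableSet_Iic,
    integral_withDensity_eq_integral_toReal_smul (measurable_gaussianPDF m v)
      (ae_of_all _ fun _ ↦ gaussianPDF_lt_top),
    ← sub_zero ((v : ℝ) * _), ← integral_Iic_of_hasDerivAt_of_tendsto' hderiv hint hlim]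
  simp

lemma gaussianPDFReal_sq_toNNReal {s : ℝ} (hs : 0 < s) (m x : ℝ) :
    gaussianPDFReal m (s ^ 2).toNNReal x = stdNormalPDF ((x - m) / s) / s := by
  rw [gaussianPDFReal, stdNormalPDF, Real.coe_toNNReal _ (sq_nonneg s),
    Real.sqrt_mul (by positivity), Real.sqrt_sq hs.le]
  field_simp

end GaussianTail

section Estimator

variable {Ω : Type*} [MeasurableSpace Ω] {P : Measure Ω} {X Z : Ω → ℝ}

lemma HasLaw.integrable_of_gaussianReal {m : ℝ} {v : ℝ≥0} (hX : HasLaw X (gaussianReal m v) P) :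
    Integrable X P := by
  rw [← Function.id_comp X, ← integrable_map_measure aestronglyMeasurable_id hX.aemeasurable,
    hX.map_eq]
  exact (memLp_id_gaussianReal 1).integrable (by simp)

lemma HasLaw.integral_eq_of_gaussianReal {m : ℝ} {v : ℝ≥0}
    (hX : HasLaw X (gaussianReal m v) P) : P[X] = m := by
  rw [hX.integral_eq, integral_id_gaussianReal]

lemma IndepFun.setIntegral_preimage (hXZ : IndepFun X Z P) (hX : Measurable X)
    (hZ : AEMeasurable Z P) {s : Set ℝ} (hs : MeasurableSet s) :
    ∫ ω in X ⁻¹' s, Z ω ∂P = P.real (X ⁻¹' s) * P[Z] := by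
  have h := hXZ.integral_fun_comp_mul_comp (f := s.indicator 1) (g := id) hX.aemeasurable hZ
    ((measurable_one.indicator hs).aestronglyMeasurable) aestronglyMeasurable_id
  simp only [← indicator_comp_right, Pi.one_comp, ← indicator_mul_left, Pi.one_apply, one_mul,
    id] at h
  rw [← integral_indicator (hX hs), h, integral_indicator_one (hX hs)]

lemma IndepFun.integral_ite_le [IsFiniteMeasure P] (hXZ : IndepFun X Z P) (hX : Measurable X)
    (hXint : Integrable X P) (hZint : Integrable Z P) (ψ : ℝ) :
    ∫ ω, (if X ω ≤ ψ then (X ω + Z ω) / 2 else X ω) ∂P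
      = P[X] + (∫ x in Iic ψ, (P[Z] - x) ∂P.map X) / 2 := by
  have hA : MeasurableSet (X ⁻¹' Iic ψ) := hX measurableSet_Iic
  have hsplit : (fun ω ↦ if X ω ≤ ψ then (X ω + Z ω) / 2 else X ω)
      = fun ω ↦ X ω + (X ⁻¹' Iic ψ).indicator (fun ω ↦ (Z ω - X ω) / 2) ω := by
    ext ω
    by_cases h : X ω ≤ ψ
    · rw [if_pos h, indicator_of_mem (show ω ∈ X ⁻¹' Iic ψ from h)]; ring
    · rw [if_neg h, indicator_of_notMem (show ω ∉ X ⁻¹' Iic ψ from h), add_zero]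
  have hZ : ∫ ω in X ⁻¹' Iic ψ, Z ω ∂P = ∫ ω in X ⁻¹' Iic ψ, P[Z] ∂P := by
    rw [hXZ.setIntegral_preimage hX hZint.aemeasurable measurableSet_Iic, setIntegral_const,
      smul_eq_mul]
  have hint : Integrable (fun ω ↦ (Z ω - X ω) / 2) P := (hZint.sub hXint).div_const 2
  rw [hsplit, integral_add hXint (hint.indicator hA), integral_indicator hA, integral_div,
    integral_sub hZint.integrableOn hXint.integrableOn, hZ,
    ← integral_sub (integrable_const _) hXint.integrableOn,
    setIntegral_map measurableSet_Iic (by fun_prop) hX.aemeasurable]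

lemma IndepFun.integral_ite_le_of_gaussianReal [IsFiniteMeasure P] {m : ℝ} {v : ℝ≥0}
    (hXZ : IndepFun X Z P) (hX : Measurable X) (hXlaw : HasLaw X (gaussianReal m v) P)
    (hZlaw : HasLaw Z (gaussianReal m v) P) (hv : v ≠ 0) (ψ : ℝ) :
    ∫ ω, (if X ω ≤ ψ then (X ω + Z ω) / 2 else X ω) ∂P
      = m + v / 2 * gaussianPDFReal m v ψ := by
  rw [hXZ.integral_ite_le hX hXlaw.integrable_of_gaussianReal hZlaw.integrable_of_gaussianReal,
    hXlaw.integral_eq_of_gaussianReal, hZlaw.integral_eq_of_gaussianReal, hXlaw.map_eq,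
    setIntegral_Iic_sub_gaussianReal hv]
  ring

end Estimator

section SampleMean

variable {Ω ι : Type*}

noncomputable def sampleMean (Y : ι → Ω → ℝ) (s : Finset ι) (ω : Ω) : ℝ :=
  (∑ i ∈ s, Y i ω) / s.card

lemma sampleMean_range_two_mul (Y : ℕ → Ω → ℝ) {n : ℕ} (hn : n ≠ 0) (ω : Ω) :
    sampleMean Y (Finset.range (2 * n)) ω
      = (sampleMean Y (Finset.range n) ω + sampleMean Y (Finset.Ico n (2 * n)) ω) / 2 := by
  have hcard : (Finset.Ico n (2 * n)).card = n := by rw [Nat.card_Ico]; omega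
  simp only [sampleMean, Finset.card_range, hcard,
    ← Finset.sum_range_add_sum_Ico _ (by omega : n ≤ 2 * n)]
  push_cast
  field_simp

variable [MeasurableSpace Ω] {P : Measure Ω} {Y : ι → Ω → ℝ} {m : ℝ} {v : ℝ≥0}

lemma measurable_sampleMean (hY : ∀ i, Measurable (Y i)) (s : Finset ι) :
    Measurable (sampleMean Y s) := by
  unfold sampleMean; fun_prop

lemma iIndepFun.indepFun_sampleMean (hY : ∀ i, Measurable (Y i)) (hindep : iIndepFun Y P)
    {s t : Finset ι} (hst : Disjoint s t) :
    IndepFun (sampleMean Y s) (sampleMean Y t) P := by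
  have hmean : ∀ u : Finset ι, Measurable fun y : u → ℝ ↦ (∑ i, y i) / u.card := fun u ↦ by
    fun_prop
  convert (hindep.indepFun_finset s t hst hY).comp (hmean s) (hmean t) using 1 <;> ext ω <;>
    simp [sampleMean, Finset.sum_attach _ (fun i ↦ Y i ω)]

variable [IsProbabilityMeasure P]

lemma iIndepFun.map_sum_eq_gaussianReal (hY : ∀ i, Measurable (Y i)) (hindep : iIndepFun Y P)
    (hlaw : ∀ i, P.map (Y i) = gaussianReal m v) (s : Finset ι) :
    P.map (∑ i ∈ s, Y i) = gaussianReal (s.card * m) (s.card * v) := by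
  classical
  induction s using Finset.induction_on with
  | empty => simp [gaussianReal_zero_var, Pi.zero_def]
  | insert a s ha ih =>
    rw [Finset.sum_insert ha, gaussianReal_add_gaussianReal_of_indepFun
      (hindep.indepFun_finsetSum_of_notMem hY ha).symm (hlaw a) ih, Finset.card_insert_of_notMem ha]
    push_cast
    congr 1 <;> ring

lemma iIndepFun.hasLaw_sampleMean (hY : ∀ i, Measurable (Y i)) (hindep : iIndepFun Y P)
    (hlaw : ∀ i, P.map (Y i) = gaussianReal m v) {s : Finset ι} (hs : s.Nonempty) :
    HasLaw (sampleMean Y s) (gaussianReal m (v / s.card)) P := by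
  refine ⟨(measurable_sampleMean hY s).aemeasurable, ?_⟩
  have hcard : (s.card : ℝ) ≠ 0 := by simp [hs.ne_empty]
  rw [show sampleMean Y s = (· / (s.card : ℝ)) ∘ ∑ i ∈ s, Y i by ext; simp [sampleMean],
    ← Measure.map_map (by fun_prop) (by fun_prop), hindep.map_sum_eq_gaussianReal hY hlaw,
    gaussianReal_map_div_const]
  congr 1
  · field_simp
  · ext
    rw [NNReal.coe_div, NNReal.coe_div, NNReal.coe_mul, NNReal.coe_mk, NNReal.coe_natCast]
    field_simp

end SampleMean

end ProbabilityTheory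

theorem stmt_4 {Ω : Type*} [MeasurableSpace Ω] (P : Measure Ω) [IsProbabilityMeasure P]
    (Y : ℕ → Ω → ℝ) (hY : ∀ i, Measurable (Y i))
    (θ σ : ℝ) (hσ : 0 < σ) (n : ℕ) (hn : 1 ≤ n)
    (hindep : iIndepFun Y P)
    (hlaw : ∀ i, Measure.map (Y i) P = gaussianReal θ ((σ ^ 2).toNNReal))
    (ψ : ℝ)
    (S₁ : Ω → ℝ) (hS₁ : ∀ ω, S₁ ω = (∑ i ∈ Finset.range n, Y i ω) / n)
    (θhat : Ω → ℝ)
    (hθhat : ∀ ω, θhat ω =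
      if S₁ ω ≤ ψ then (∑ i ∈ Finset.range (2 * n), Y i ω) / (2 * n) else S₁ ω) :
    ∫ ω, θhat ω ∂P
      = θ + σ / (2 * Real.sqrt n) * stdNormalPDF (Real.sqrt n / σ * (ψ - θ)) := by
  have hn0 : n ≠ 0 := by omega
  have hlaw_block : ∀ t : Finset ℕ, t.card = n →
      HasLaw (sampleMean Y t) (gaussianReal θ ((σ / √n) ^ 2).toNNReal) P := fun t ht ↦ by
    have hvar : (σ ^ 2).toNNReal / n = ((σ / √n) ^ 2).toNNReal := by
      rw [div_pow, Real.sq_sqrt n.cast_nonneg, Real.toNNReal_div (sq_nonneg σ),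
        Real.toNNReal_natCast]
    simpa [ht, hvar] using
      hindep.hasLaw_sampleMean hY hlaw (s := t) (Finset.card_pos.mp (by omega))
  obtain rfl : S₁ = sampleMean Y (Finset.range n) := by ext ω; simp [hS₁, sampleMean]
  have hθhat_eq : θhat = fun ω ↦ if sampleMean Y (Finset.range n) ω ≤ ψ
      then (sampleMean Y (Finset.range n) ω + sampleMean Y (Finset.Ico n (2 * n)) ω) / 2
      else sampleMean Y (Finset.range n) ω := by
    ext ω
    rw [hθhat, ← sampleMean_range_two_mul Y hn0]
    simp only [sampleMean, Finset.card_range, Nat.cast_mul, Nat.cast_ofNat]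
  have hdisj : Disjoint (Finset.range n) (Finset.Ico n (2 * n)) :=
    Finset.range_eq_Ico n ▸ Finset.Ico_disjoint_Ico_consecutive ..
  rw [hθhat_eq, (hindep.indepFun_sampleMean hY hdisj).integral_ite_le_of_gaussianReal
    (measurable_sampleMean hY _) (hlaw_block _ (by simp))
    (hlaw_block _ (by rw [Nat.card_Ico]; omega)) (by simp [hσ.ne', hn0]),
    gaussianPDFReal_sq_toNNReal (by positivity), Real.coe_toNNReal _ (sq_nonneg _),
    show (ψ - θ) / (σ / √n) = √n / σ * (ψ - θ) by field_simp]
  field_simp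
end

section
/- Let Θ have the density f(θ) = Φ(ε(a + bθ − ȳ)/ω)·φ((θ − m)/s) / (s·Φ(ε(a + bm − ȳ)/√(ω² + s²b²))) with s > 0, ω > 0, ε ∈ {+1,−1}. Then the moment generating function of Θ is M(t) = exp(t²s²/2 + m t) · Φ(ε(a + b(m + t s²) − ȳ)/√(ω² + s²b²)) / Φ(ε(a + bm − ȳ)/√(ω² + s²b²)). -/
/-!
Completing the square, `exp (t θ) φ((θ - m)/s) = exp (t²s²/2 + m t) φ((θ - (m + t s²))/s)`, so the
MGF reduces to the probit–normal integral `E[Φ(α + β X)] = Φ((α + β μ)/√(1 + β² v))` for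
`X ~ N(μ, v)`, with `α = ε(a - ȳ)/ω` and `β = εb/ω`. For the latter write `Φ(x) = ∫_{u ≤ 0} φ(u + x)`
and swap the integrals: `φ(u + α + βθ)` times the density of `X` factors as a Gaussian density in
`θ` times `φ((u + α + βμ)/c)/c` with `c = √(1 + β² v)`, and integrating over `u ≤ 0` gives
`Φ((α + βμ)/c)`.
-/

open MeasureTheory ProbabilityTheory Real

open Set
open scoped NNReal

lemma stdNormalPDF_eq_gaussianPDFReal : stdNormalPDF = gaussianPDFReal 0 1 := by
  ext z; simp [stdNormalPDF, gaussianPDFReal]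

lemma stdNormalPDF_nonneg (z : ℝ) : 0 ≤ stdNormalPDF z :=
  stdNormalPDF_eq_gaussianPDFReal ▸ gaussianPDFReal_nonneg 0 1 z

lemma measurable_stdNormalPDF : Measurable stdNormalPDF :=
  stdNormalPDF_eq_gaussianPDFReal ▸ measurable_gaussianPDFReal 0 1

lemma integrable_stdNormalPDF : Integrable stdNormalPDF :=
  stdNormalPDF_eq_gaussianPDFReal ▸ integrable_gaussianPDFReal 0 1

lemma integral_stdNormalPDF : ∫ z, stdNormalPDF z = 1 :=
  stdNormalPDF_eq_gaussianPDFReal ▸ integral_gaussianPDFReal_eq_one 0 one_ne_zero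

lemma stdNormalCDF_nonneg (z : ℝ) : 0 ≤ stdNormalCDF z :=
  setIntegral_nonneg measurableSet_Iic fun x _ ↦ stdNormalPDF_nonneg x

lemma stdNormalCDF_le_one (z : ℝ) : stdNormalCDF z ≤ 1 :=
  integral_stdNormalPDF ▸
    setIntegral_le_integral integrable_stdNormalPDF (.of_forall stdNormalPDF_nonneg)

lemma monotone_stdNormalCDF : Monotone stdNormalCDF := fun _ _ hxy ↦
  setIntegral_mono_set integrable_stdNormalPDF.integrableOn (.of_forall stdNormalPDF_nonneg)
    (Iic_subset_Iic.2 hxy).eventuallyLE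

lemma setIntegral_Iic_comp_add_div {E : Type*} [NormedAddCommGroup E] [NormedSpace ℝ E]
    (g : ℝ → E) (z d : ℝ) {c : ℝ} (hc : 0 < c) :
    ∫ x in Iic z, g ((x + d) / c) = c • ∫ x in Iic ((z + d) / c), g x := by
  have hind : (Iic z).indicator (fun x ↦ g ((x + d) / c))
      = fun x ↦ (Iic ((z + d) / c)).indicator g ((x + d) / c) := by
    ext x
    simp only [indicator, mem_Iic, div_le_div_iff_of_pos_right hc, add_le_add_iff_right]
  rw [← integral_indicator measurableSet_Iic, hind,
    integral_add_right_eq_self (fun x ↦ (Iic ((z + d) / c)).indicator g (x / c)),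
    Measure.integral_comp_div, integral_indicator measurableSet_Iic, abs_of_pos hc]

lemma setIntegral_Iic_stdNormalPDF_add_div (z d : ℝ) {c : ℝ} (hc : 0 < c) :
    ∫ u in Iic z, c⁻¹ * stdNormalPDF ((u + d) / c) = stdNormalCDF ((z + d) / c) := by
  rw [integral_const_mul, setIntegral_Iic_comp_add_div _ _ _ hc, smul_eq_mul,
    inv_mul_cancel_left₀ hc.ne', stdNormalCDF]

lemma gaussianPDFReal_eq_stdNormalPDF (μ : ℝ) (v : ℝ≥0) (x : ℝ) :
    gaussianPDFReal μ v x = (√v)⁻¹ * stdNormalPDF ((x - μ) / √v) := by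
  rcases eq_or_ne v 0 with rfl | hv
  · simp
  have hv' : (0 : ℝ) < v := by positivity
  rw [gaussianPDFReal, stdNormalPDF, div_pow, sq_sqrt hv'.le, sqrt_mul (by positivity)]
  field_simp

lemma gaussianPDFReal_sq_toNNReal (μ : ℝ) {s : ℝ} (hs : 0 ≤ s) (x : ℝ) :
    gaussianPDFReal μ (s ^ 2).toNNReal x = s⁻¹ * stdNormalPDF ((x - μ) / s) := by
  rw [gaussianPDFReal_eq_stdNormalPDF, coe_toNNReal _ (sq_nonneg s), sqrt_sq hs]

lemma stdNormalPDF_mul_gaussianPDFReal (y β μ : ℝ) (v : ℝ≥0) (θ : ℝ) :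
    stdNormalPDF (y + β * θ) * gaussianPDFReal μ v θ
      = (√(1 + β ^ 2 * v))⁻¹ * stdNormalPDF ((y + β * μ) / √(1 + β ^ 2 * v))
        * gaussianPDFReal ((μ - β * y * v) / (1 + β ^ 2 * v))
            (v / (1 + β ^ 2 * v)).toNNReal θ := by
  rcases eq_or_ne v 0 with rfl | hv
  · simp
  have hv' : (0 : ℝ) < v := by positivity
  have hc : (0 : ℝ) < 1 + β ^ 2 * v := by positivity
  simp only [gaussianPDFReal, stdNormalPDF, coe_toNNReal _ (div_pos hv' hc).le]
  have hexp : -(y + β * θ) ^ 2 / 2 + -(θ - μ) ^ 2 / (2 * v)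
      = -((y + β * μ) / √(1 + β ^ 2 * v)) ^ 2 / 2
        + -(θ - (μ - β * y * v) / (1 + β ^ 2 * v)) ^ 2 / (2 * (v / (1 + β ^ 2 * v))) := by
    rw [div_pow, sq_sqrt hc.le]
    field_simp
    ring
  calc _ = (√(2 * π))⁻¹ * (√(2 * π * v))⁻¹
        * rexp (-(y + β * θ) ^ 2 / 2 + -(θ - μ) ^ 2 / (2 * v)) := by rw [exp_add]; ring
    _ = _ := by
      rw [hexp, exp_add, ← mul_div_assoc (2 * π), sqrt_div (by positivity)]
      field_simp

lemma integral_stdNormalPDF_mul_gaussianPDFReal (y β μ : ℝ) {v : ℝ≥0} (hv : v ≠ 0) :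
    ∫ θ, stdNormalPDF (y + β * θ) * gaussianPDFReal μ v θ
      = (√(1 + β ^ 2 * v))⁻¹ * stdNormalPDF ((y + β * μ) / √(1 + β ^ 2 * v)) := by
  have hw : (v / (1 + β ^ 2 * v) : ℝ).toNNReal ≠ 0 := by
    have : (0 : ℝ) < v := by positivity
    simp only [ne_eq, toNNReal_eq_zero, not_le]
    positivity
  simp_rw [stdNormalPDF_mul_gaussianPDFReal, integral_const_mul,
    integral_gaussianPDFReal_eq_one _ hw, mul_one]

lemma stdNormalCDF_eq_setIntegral_Iic_zero (x : ℝ) :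
    stdNormalCDF x = ∫ u in Iic 0, stdNormalPDF (u + x) := by
  simpa using (setIntegral_Iic_stdNormalPDF_add_div 0 x one_pos).symm

lemma integral_stdNormalCDF_mul_eq_setIntegral_integral (α β : ℝ) {ρ : ℝ → ℝ}
    (hρ : Integrable ρ) :
    ∫ θ, stdNormalCDF (α + β * θ) * ρ θ
      = ∫ u in Iic 0, ∫ θ, stdNormalPDF (u + (α + β * θ)) * ρ θ := by
  set F : ℝ → ℝ → ℝ := fun θ u ↦ stdNormalPDF (u + (α + β * θ)) * ρ θ
  have hCDF_meas : Measurable fun θ ↦ stdNormalCDF (α + β * θ) :=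
    monotone_stdNormalCDF.measurable.comp (by fun_prop)
  have hnorm : ∀ θ, ∫ u in Iic 0, ‖F θ u‖ = stdNormalCDF (α + β * θ) * ‖ρ θ‖ := fun θ ↦ by
    simp only [F, norm_mul, norm_of_nonneg (stdNormalPDF_nonneg _), integral_mul_const,
      ← stdNormalCDF_eq_setIntegral_Iic_zero]
  have hF : Integrable (Function.uncurry F) (volume.prod (volume.restrict (Iic 0))) := by
    have hmeas : AEStronglyMeasurable (Function.uncurry F)
        (volume.prod (volume.restrict (Iic (0 : ℝ)))) := by
      have h1 : Measurable fun p : ℝ × ℝ ↦ stdNormalPDF (p.2 + (α + β * p.1)) :=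
        measurable_stdNormalPDF.comp (by fun_prop)
      exact h1.aestronglyMeasurable.mul (hρ.aestronglyMeasurable.comp_fst)
    refine (integrable_prod_iff hmeas).2 ⟨.of_forall fun θ ↦ ?_, ?_⟩
    · show Integrable (fun u ↦ stdNormalPDF (u + (α + β * θ)) * ρ θ) (volume.restrict (Iic 0))
      exact (integrable_stdNormalPDF.comp_add_right _).integrableOn.mul_const _
    · show Integrable (fun θ ↦ ∫ u in Iic 0, ‖F θ u‖)
      simp_rw [hnorm]
      refine hρ.norm.bdd_mul hCDF_meas.aestronglyMeasurable (c := 1) (.of_forall fun θ ↦ ?_)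
      rw [norm_of_nonneg (stdNormalCDF_nonneg _)]
      exact stdNormalCDF_le_one _
  calc ∫ θ, stdNormalCDF (α + β * θ) * ρ θ = ∫ θ, ∫ u in Iic 0, F θ u := by
        simp only [F, integral_mul_const, ← stdNormalCDF_eq_setIntegral_Iic_zero]
    _ = ∫ u in Iic 0, ∫ θ, F θ u := integral_integral_swap hF

theorem integral_stdNormalCDF_mul_gaussianPDFReal (α β μ : ℝ) {v : ℝ≥0} (hv : v ≠ 0) :
    ∫ θ, stdNormalCDF (α + β * θ) * gaussianPDFReal μ v θ
      = stdNormalCDF ((α + β * μ) / √(1 + β ^ 2 * v)) := by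
  rw [integral_stdNormalCDF_mul_eq_setIntegral_integral α β (integrable_gaussianPDFReal μ v)]
  simp_rw [← add_assoc, integral_stdNormalPDF_mul_gaussianPDFReal _ _ _ hv, add_assoc]
  simpa using setIntegral_Iic_stdNormalPDF_add_div 0 (α + β * μ) (c := √(1 + β ^ 2 * v))
    (by positivity)

lemma exp_mul_gaussianPDFReal (t μ : ℝ) (v : ℝ≥0) (θ : ℝ) :
    rexp (t * θ) * gaussianPDFReal μ v θ
      = rexp (μ * t + v * t ^ 2 / 2) * gaussianPDFReal (μ + v * t) v θ := by
  rcases eq_or_ne v 0 with rfl | hv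
  · simp
  have hv' : (0 : ℝ) < v := by positivity
  simp only [gaussianPDFReal]
  rw [mul_left_comm, ← exp_add, mul_left_comm (rexp _), ← exp_add]
  congr 2
  field_simp
  ring

theorem stmt_14 (m s a b ω ybar : ℝ) (hs : 0 < s) (hω : 0 < ω)
    (ε : ℝ) (hε : ε = 1 ∨ ε = -1)
    (f : ℝ → ℝ)
    (hf : ∀ θ, f θ = stdNormalCDF (ε * (a + b * θ - ybar) / ω) * stdNormalPDF ((θ - m) / s)
        / (s * stdNormalCDF (ε * (a + b * m - ybar) / Real.sqrt (ω ^ 2 + s ^ 2 * b ^ 2)))) :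
    ∀ t : ℝ, ∫ θ : ℝ, Real.exp (t * θ) * f θ
      = Real.exp (t ^ 2 * s ^ 2 / 2 + m * t)
          * stdNormalCDF (ε * (a + b * (m + t * s ^ 2) - ybar)
              / Real.sqrt (ω ^ 2 + s ^ 2 * b ^ 2))
          / stdNormalCDF (ε * (a + b * m - ybar) / Real.sqrt (ω ^ 2 + s ^ 2 * b ^ 2)) := by
  intro t
  set v : ℝ≥0 := (s ^ 2).toNNReal
  have hv : (v : ℝ) = s ^ 2 := coe_toNNReal _ (sq_nonneg s)
  have hv0 : v ≠ 0 := by simpa [v] using hs.ne'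
  set α := ε * (a - ybar) / ω
  set β := ε * b / ω
  have hprobit : ∀ μ, (α + β * μ) / √(1 + β ^ 2 * v)
      = ε * (a + b * μ - ybar) / √(ω ^ 2 + s ^ 2 * b ^ 2) := fun μ ↦ by
    have hε2 : ε ^ 2 = 1 := by rcases hε with rfl | rfl <;> norm_num
    have hvar : 1 + β ^ 2 * v = (ω ^ 2 + s ^ 2 * b ^ 2) / ω ^ 2 := by
      rw [hv, div_pow, mul_pow, hε2]
      field_simp
    rw [hvar, sqrt_div (by positivity), sqrt_sq hω.le]
    simp only [α, β]
    field_simp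
    ring
  have hintegrand : ∀ θ, rexp (t * θ) * f θ = rexp (m * t + v * t ^ 2 / 2)
      / stdNormalCDF (ε * (a + b * m - ybar) / √(ω ^ 2 + s ^ 2 * b ^ 2))
      * (stdNormalCDF (α + β * θ) * gaussianPDFReal (m + v * t) v θ) := fun θ ↦ by
    have hshift := exp_mul_gaussianPDFReal t m v θ
    rw [gaussianPDFReal_sq_toNNReal m hs.le] at hshift
    rw [hf θ, show ε * (a + b * θ - ybar) / ω = α + β * θ by ring]
    linear_combination stdNormalCDF (α + β * θ)
      / stdNormalCDF (ε * (a + b * m - ybar) / √(ω ^ 2 + s ^ 2 * b ^ 2)) * hshift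
  simp_rw [hintegrand]
  rw [integral_const_mul, integral_stdNormalCDF_mul_gaussianPDFReal _ _ _ hv0, hprobit, hv]
  ring_nf
end
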